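/- Let G_1 = (V_1, E_1) and G_2 = (V_2, E_2) be exactly k-edge-connected multigraphs on disjoint vertex sets, let u_1 ∈ V_1 and u_2 ∈ V_2 be vertices of degree k with (not necessarily distinct) neighbors v_1^1,...,v_1^k of u_1 and v_2^1,...,v_2^k of u_2 listed so that the i-th edge at u_1 goes to v_1^i and the i-th edge at u_2 goes to v_2^i. Let G be the vertex gluing of G_1 and G_2: delete u_1 and u_2 together with their incident edges and add the k edges (v_1^i, v_2^i) for 1 ≤ i ≤ k. Then G is exactly k-edge-connected. -/

import Mathlib

/-! Basic theory of loopless undirected multigraphs. -/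

/-- A loopless undirected multigraph on the vertex type `V`: a type of edges
together with a map assigning to each edge its unordered pair of (distinct)
endpoints.  All multigraphs are assumed to have finitely many edges. -/
structure Multigraph (V : Type) where
  Edge : Type
  ends : Edge → Sym2 V
  loopless : ∀ e, ¬ (ends e).IsDiag
  edge_finite : Finite Edge

namespace Multigraph

open scoped Classical

variable {V : Type}

instance (G : Multigraph V) : Finite G.Edge := G.edge_finite

lemma exists_pair_eq {α : Type} (z : Sym2 α) : ∃ x y, z = s(x, y) := by
  induction z using Sym2.ind with
  | _ x y => exact ⟨x, y, rfl⟩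

lemma map_not_isDiag {α β : Type} (f : α → β) (z : Sym2 α)
    (hf : ∀ x ∈ z, ∀ y ∈ z, f x = f y → x = y) (hz : ¬ z.IsDiag) :
    ¬ (z.map f).IsDiag := by
  obtain ⟨x, y, rfl⟩ := exists_pair_eq z
  rw [Sym2.map_pair_eq, Sym2.mk_isDiag_iff]
  rw [Sym2.mk_isDiag_iff] at hz
  exact fun h => hz (hf x (by simp) y (by simp) h)

/-- Restrict an unordered pair, all of whose members satisfy `P`, to an
unordered pair of elements of the subtype `{x // P x}`. -/
noncomputable def sym2RestrictP {α : Type} (P : α → Prop) (z : Sym2 α) (h : ∀ x ∈ z, P x) :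
    Sym2 {x : α // P x} :=
  z.map fun x =>
    if hx : P x then ⟨x, hx⟩
    else Classical.choice (by
      obtain ⟨a, b, rfl⟩ := exists_pair_eq z
      exact ⟨⟨a, h a (by simp)⟩⟩)

lemma sym2RestrictP_not_isDiag {α : Type} (P : α → Prop) (z : Sym2 α) (h : ∀ x ∈ z, P x)
    (hz : ¬ z.IsDiag) : ¬ (sym2RestrictP P z h).IsDiag := by
  apply map_not_isDiag
  · intro a ha b hb hab
    rw [dif_pos (h a ha), dif_pos (h b hb)] at hab
    exact congrArg Subtype.val hab
  · exact hz

/-- Walks in a multigraph, recorded as alternating sequences of vertices and edges. -/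
inductive Walk (G : Multigraph V) : V → V → Type
  | nil (v : V) : Walk G v v
  | cons {u v w : V} (e : G.Edge) (he : G.ends e = s(u, v)) (p : Walk G v w) : Walk G u w

namespace Walk

variable {G : Multigraph V}

/-- The list of edges used by a walk. -/
def edges : ∀ {u v : V}, G.Walk u v → List G.Edge
  | _, _, nil _ => []
  | _, _, cons e _ p => e :: p.edges

/-- The list of vertices visited by a walk, in order. -/
def support : ∀ {u v : V}, G.Walk u v → List V
  | u, _, nil _ => [u]
  | u, _, cons _ _ p => u :: p.support

end Walk

/-- `G.HasEDP u v k` : there are (at least) `k` pairwise edge-disjoint paths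
between `u` and `v` in `G` (formalized as `k` pairwise edge-disjoint trails,
which is equivalent). -/
def HasEDP (G : Multigraph V) (u v : V) (k : ℕ) : Prop :=
  ∃ P : Fin k → G.Walk u v,
    (∀ i, (P i).edges.Nodup) ∧
    ∀ i j, i ≠ j → ∀ e, e ∈ (P i).edges → e ∉ (P j).edges

/-- `G` is `k`-edge-connected: between any two distinct vertices there are at
least `k` pairwise edge-disjoint paths. -/
def EdgeConnected (G : Multigraph V) (k : ℕ) : Prop :=
  Nontrivial V ∧ ∀ u v : V, u ≠ v → G.HasEDP u v k

/-- `G` is exactly `k`-edge-connected: between any two distinct vertices there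
are exactly `k` pairwise edge-disjoint paths (at least `k`, and not `k + 1`). -/
def ExactlyEdgeConnected (G : Multigraph V) (k : ℕ) : Prop :=
  Nontrivial V ∧ ∀ u v : V, u ≠ v → G.HasEDP u v k ∧ ¬ G.HasEDP u v (k + 1)

/-- The degree of a vertex: the number of edges incident to it. -/
noncomputable def degree (G : Multigraph V) (v : V) : ℕ :=
  {e : G.Edge | v ∈ G.ends e}.ncard

/-- Two vertices are adjacent if some edge joins them. -/
def Adj (G : Multigraph V) (u v : V) : Prop := ∃ e : G.Edge, G.ends e = s(u, v)

/-- `G` restricted to `S` is connected (witnessed by walks staying inside `S`). -/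
def ConnectedOn (G : Multigraph V) (S : Set V) : Prop :=
  ∀ u ∈ S, ∀ v ∈ S, ∃ p : G.Walk u v, ∀ x ∈ p.support, x ∈ S

/-- A multigraph is connected if it is nonempty and any two vertices are
joined by a walk. -/
def Connected (G : Multigraph V) : Prop :=
  Nonempty V ∧ ∀ u v : V, Nonempty (G.Walk u v)

/-- A multigraph is 2-vertex-connected (biconnected) if it is connected and
removing any single vertex leaves it connected. -/
def Biconnected (G : Multigraph V) : Prop :=
  G.Connected ∧ ∀ x : V, G.ConnectedOn {x}ᶜ

/-- A closed walk is a cycle if it repeats no edge, repeats no vertex except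
the base point, and has length at least 2 (a double edge is a cycle of
length 2; loops are excluded since multigraphs are loopless). -/
def IsCycle {G : Multigraph V} {v : V} (p : G.Walk v v) : Prop :=
  p.edges.Nodup ∧ p.support.tail.Nodup ∧ 2 ≤ p.edges.length

/-- A closed walk is chordless if no edge outside of it joins two of its
vertices (a parallel copy of one of its edges counts as a chord). -/
def IsChordless {G : Multigraph V} {v : V} (p : G.Walk v v) : Prop :=
  ∀ e : G.Edge, e ∉ p.edges → ∀ x y : V, G.ends e = s(x, y) →
    x ∈ p.support → y ∈ p.support → False

/-- `G.ReachAvoid S x y`: there is a walk from `x` to `y` avoiding the set `S`. -/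
def ReachAvoid (G : Multigraph V) (S : Set V) (x y : V) : Prop :=
  ∃ p : G.Walk x y, ∀ z ∈ p.support, z ∉ S

/-- The vertex sets of the connected components of `G ∖ S`.  For a cycle (or
any subgraph) `C`, the `C`-partition of the paper consists of `C` together
with these components; its size is the number of components. -/
def componentsAvoiding (G : Multigraph V) (S : Set V) : Set (Set V) :=
  {T | ∃ x, x ∉ S ∧ T = {y | G.ReachAvoid S x y}}

/-- Contract the (nonempty) vertex set `S` of `G` to a single new vertex
(`none`), deleting the edges inside `S`. -/
noncomputable def contractSet (G : Multigraph V) (S : Set V) :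
    Multigraph (Option {x : V // x ∉ S}) where
  Edge := {e : G.Edge // ¬ ∀ x ∈ G.ends e, x ∈ S}
  ends e := (G.ends e.1).map fun x => if h : x ∈ S then none else some ⟨x, h⟩
  loopless := by
    rintro ⟨e, he⟩ hd
    obtain ⟨x, y, hxy⟩ := exists_pair_eq (G.ends e)
    have hxyne : x ≠ y := by
      have h0 := G.loopless e
      rw [hxy, Sym2.mk_isDiag_iff] at h0
      exact h0
    have hor : x ∉ S ∨ y ∉ S := by
      by_contra hcon
      push_neg at hcon
      refine he fun z hz => ?_
      rw [hxy, Sym2.mem_iff] at hz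
      rcases hz with rfl | rfl
      exacts [hcon.1, hcon.2]
    simp only [hxy, Sym2.map_pair_eq, Sym2.mk_isDiag_iff] at hd
    rcases hor with hx | hy
    · rw [dif_neg hx] at hd
      by_cases hy : y ∈ S
      · rw [dif_pos hy] at hd; exact nomatch hd
      · rw [dif_neg hy] at hd
        exact hxyne (congrArg Subtype.val (Option.some_injective _ hd))
    · rw [dif_neg hy] at hd
      by_cases hx : x ∈ S
      · rw [dif_pos hx] at hd; exact nomatch hd
      · rw [dif_neg hx] at hd
        exact hxyne (congrArg Subtype.val (Option.some_injective _ hd))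
  edge_finite := by
    have := G.edge_finite
    exact inferInstance

/-- The subgraph of `G` induced by the vertex set `S`. -/
noncomputable def induce (G : Multigraph V) (S : Set V) : Multigraph ↥S where
  Edge := {e : G.Edge // ∀ x ∈ G.ends e, x ∈ S}
  ends e := sym2RestrictP (· ∈ S) (G.ends e.1) e.2
  loopless := fun e => sym2RestrictP_not_isDiag _ _ _ (G.loopless e.1)
  edge_finite := by
    have := G.edge_finite
    exact inferInstance

/-- Isomorphism of multigraphs. -/
structure Iso {V W : Type} (G : Multigraph V) (H : Multigraph W) where
  vmap : V ≃ W
  emap : G.Edge ≃ H.Edge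
  ends_vmap : ∀ e : G.Edge, H.ends (emap e) = (G.ends e).map vmap

/-- `G` is quasi `k`-regular: at most one vertex has degree different from `k`. -/
def QuasiRegular (G : Multigraph V) (k : ℕ) : Prop :=
  {v : V | G.degree v ≠ k}.Subsingleton

end Multigraph
namespace Multigraph

open scoped Classical

variable {V : Type}

/-- Block gluing: identify the vertex `u₁` of `G₁` with the vertex `u₂` of `G₂`
(the identified vertex is represented by `Sum.inl u₁`), keeping all edges. -/
noncomputable def blockGlue {V₁ V₂ : Type} (G₁ : Multigraph V₁) (G₂ : Multigraph V₂)
    (u₁ : V₁) (u₂ : V₂) : Multigraph (V₁ ⊕ {y : V₂ // y ≠ u₂}) where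
  Edge := G₁.Edge ⊕ G₂.Edge
  ends e :=
    match e with
    | .inl e => (G₁.ends e).map Sum.inl
    | .inr e => (G₂.ends e).map fun y => if h : y = u₂ then Sum.inl u₁ else Sum.inr ⟨y, h⟩
  loopless := by
    rintro (e | e) hd
    · exact map_not_isDiag _ _ (fun x _ y _ h => Sum.inl_injective h) (G₁.loopless e) hd
    · refine map_not_isDiag _ _ (fun x _ y _ h => ?_) (G₂.loopless e) hd
      by_cases hx : x = u₂ <;> by_cases hy : y = u₂
      · rw [hx, hy]
      · simp [hx, hy] at h
      · simp [hx, hy] at h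
      · simp [hx, hy] at h
        exact h
  edge_finite := by
    have := G₁.edge_finite; have := G₂.edge_finite
    exact inferInstance

/-- `k`-bridge addition: add a new vertex (`none`) joined to the existing
vertex `v` by `k` parallel edges. -/
def bridgeAdd (G : Multigraph V) (v : V) (k : ℕ) : Multigraph (Option V) where
  Edge := G.Edge ⊕ Fin k
  ends e :=
    match e with
    | .inl e => (G.ends e).map some
    | .inr _ => s(none, some v)
  loopless := by
    rintro (e | i) hd
    · exact map_not_isDiag _ _ (fun x _ y _ h => Option.some_injective _ h) (G.loopless e) hd
    · rw [Sym2.mk_isDiag_iff] at hd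
      exact nomatch hd
  edge_finite := by
    have := G.edge_finite
    exact inferInstance

end Multigraph
namespace Multigraph

open scoped Classical

variable {V : Type}

lemma other_ne {G : Multigraph V} {u : V} {e : G.Edge} (h : u ∈ G.ends e) :
    Sym2.Mem.other h ≠ u := by
  intro heq
  have hs := Sym2.other_spec h
  rw [heq] at hs
  have hl := G.loopless e
  rw [← hs, Sym2.mk_isDiag_iff] at hl
  exact hl rfl

/-- Vertex gluing: given vertices `u₁` of `G₁` and `u₂` of `G₂`, both of degree
`k` (witnessed by enumerations `ι₁`, `ι₂` of their incident edges), delete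
`u₁` and `u₂` and join, for each `i`, the other endpoint of the `i`-th edge at
`u₁` to the other endpoint of the `i`-th edge at `u₂`. -/
noncomputable def vertexGlue {V₁ V₂ : Type} (G₁ : Multigraph V₁) (G₂ : Multigraph V₂)
    (u₁ : V₁) (u₂ : V₂) {k : ℕ}
    (ι₁ : Fin k ≃ {e : G₁.Edge // u₁ ∈ G₁.ends e})
    (ι₂ : Fin k ≃ {e : G₂.Edge // u₂ ∈ G₂.ends e}) :
    Multigraph ({x : V₁ // x ≠ u₁} ⊕ {y : V₂ // y ≠ u₂}) where
  Edge := {e : G₁.Edge // u₁ ∉ G₁.ends e} ⊕ {e : G₂.Edge // u₂ ∉ G₂.ends e} ⊕ Fin k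
  ends e :=
    match e with
    | .inl e =>
        (sym2RestrictP (· ≠ u₁) (G₁.ends e.1) fun x hx hxe => e.2 (hxe ▸ hx)).map Sum.inl
    | .inr (.inl e) =>
        (sym2RestrictP (· ≠ u₂) (G₂.ends e.1) fun y hy hye => e.2 (hye ▸ hy)).map Sum.inr
    | .inr (.inr i) =>
        s(Sum.inl ⟨Sym2.Mem.other (ι₁ i).2, other_ne (ι₁ i).2⟩,
          Sum.inr ⟨Sym2.Mem.other (ι₂ i).2, other_ne (ι₂ i).2⟩)
  loopless := by
    rintro (e | e | i) hd
    · exact map_not_isDiag _ _ (fun x _ y _ h => Sum.inl_injective h)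
        (sym2RestrictP_not_isDiag _ _ _ (G₁.loopless e.1)) hd
    · exact map_not_isDiag _ _ (fun x _ y _ h => Sum.inr_injective h)
        (sym2RestrictP_not_isDiag _ _ _ (G₂.loopless e.1)) hd
    · rw [Sym2.mk_isDiag_iff] at hd
      exact nomatch hd
  edge_finite := by
    have := G₁.edge_finite; have := G₂.edge_finite
    exact inferInstance

/-- Cycle expansion: replace the vertex `u`, of degree `d` with incident edges
enumerated by `ι`, by a cycle on `d'` new vertices `u_0, …, u_{d'-1}`
(`2 ≤ d' ≤ d`); the `i`-th former edge at `u` is attached to `u_i` for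
`i < d' - 1` and to `u_{d'-1}` for `i ≥ d' - 1`, so each of `u_0, …, u_{d'-2}`
receives exactly one of them and `u_{d'-1}` receives the rest. -/
noncomputable def cycleExpand (G : Multigraph V) (u : V) {d d' : ℕ}
    (h2 : 2 ≤ d') (hdd : d' ≤ d)
    (ι : Fin d ≃ {e : G.Edge // u ∈ G.ends e}) :
    Multigraph ({x : V // x ≠ u} ⊕ Fin d') where
  Edge := {e : G.Edge // u ∉ G.ends e} ⊕ (Fin d ⊕ Fin d')
  ends e :=
    match e with
    | .inl e =>
        (sym2RestrictP (· ≠ u) (G.ends e.1) fun x hx hxe => e.2 (hxe ▸ hx)).map Sum.inl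
    | .inr (.inl i) =>
        s(Sum.inr ⟨min i.1 (d' - 1), by omega⟩,
          Sum.inl ⟨Sym2.Mem.other (ι i).2, other_ne (ι i).2⟩)
    | .inr (.inr j) =>
        s(Sum.inr j, Sum.inr ⟨(j.1 + 1) % d', Nat.mod_lt _ (by omega)⟩)
  loopless := by
    rintro (e | i | j) hd
    · exact map_not_isDiag _ _ (fun x _ y _ h => Sum.inl_injective h)
        (sym2RestrictP_not_isDiag _ _ _ (G.loopless e.1)) hd
    · rw [Sym2.mk_isDiag_iff] at hd
      exact nomatch hd
    · rw [Sym2.mk_isDiag_iff] at hd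
      have hj : j.1 < d' := j.2
      have := congrArg Fin.val (Sum.inr_injective hd)
      simp only at this
      rcases Nat.lt_or_ge (j.1 + 1) d' with h | h
      · rw [Nat.mod_eq_of_lt h] at this; omega
      · have hj1 : j.1 + 1 = d' := by omega
        rw [hj1, Nat.mod_self] at this; omega
  edge_finite := by
    have := G.edge_finite
    exact inferInstance

end Multigraph
namespace Multigraph

open scoped Classical

variable {V : Type}

/-- The edges of `G` crossing the vertex bipartition `⟨A, Aᶜ⟩`. -/
def cutEdges (G : Multigraph V) (A : Set V) : Set G.Edge :=
  {e | (∃ x ∈ G.ends e, x ∈ A) ∧ ∃ y ∈ G.ends e, y ∉ A}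

/-- The bipartition `⟨A, Aᶜ⟩` is a minimum edge cut of `G`: both sides are
nonempty and no other bipartition has fewer crossing edges. -/
def IsMinCut (G : Multigraph V) (A : Set V) : Prop :=
  A.Nonempty ∧ Aᶜ.Nonempty ∧
    ∀ B : Set V, B.Nonempty → Bᶜ.Nonempty →
      (G.cutEdges A).ncard ≤ (G.cutEdges B).ncard

/-- One side of a vertex splitting: keep the side `A` of the cut `⟨A, Aᶜ⟩`,
delete the other side, and reattach each cut edge to a single new vertex
(`none`). -/
noncomputable def splitSide (G : Multigraph V) (A : Set V) :
    Multigraph (Option {x : V // x ∈ A}) where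
  Edge := {e : G.Edge // ∀ x ∈ G.ends e, x ∈ A} ⊕ {e : G.Edge // e ∈ G.cutEdges A}
  ends e :=
    match e with
    | .inl e => (sym2RestrictP (· ∈ A) (G.ends e.1) e.2).map some
    | .inr e =>
        s(none, some ⟨Classical.choose e.2.1, (Classical.choose_spec e.2.1).2⟩)
  loopless := by
    rintro (e | e) hd
    · exact map_not_isDiag _ _ (fun x _ y _ h => Option.some_injective _ h)
        (sym2RestrictP_not_isDiag _ _ _ (G.loopless e.1)) hd
    · rw [Sym2.mk_isDiag_iff] at hd
      exact nomatch hd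
  edge_finite := by
    have := G.edge_finite
    exact inferInstance

/-- The dumbbell graph: two vertices joined by three parallel edges. -/
def dumbbell : Multigraph (Fin 2) where
  Edge := Fin 3
  ends _ := s(0, 1)
  loopless := fun _ h => absurd (Sym2.mk_isDiag_iff.mp h) (by decide)
  edge_finite := inferInstance

/-- `B` is (the vertex set of) a block of `G`: a maximal set of vertices
inducing a connected, 2-vertex-connected subgraph. -/
def IsBlock (G : Multigraph V) (B : Set V) : Prop :=
  (G.induce B).Biconnected ∧
    ∀ B' : Set V, B ⊆ B' → (G.induce B').Biconnected → B' = B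

/-- The set of double edges of `G`, as unordered pairs of distinct parallel
edges. -/
def doubleEdges (G : Multigraph V) : Set (Sym2 G.Edge) :=
  {z | ∃ e f : G.Edge, z = s(e, f) ∧ e ≠ f ∧ G.ends e = G.ends f}

/-- A collapsible cycle: a chordless, non-articulation cycle, all but at most
one of whose vertices have degree 3, whose contraction to a single vertex
yields an exactly 3-edge-connected multigraph. -/
def IsCollapsible {G : Multigraph V} {v : V} (p : G.Walk v v) : Prop :=
  IsCycle p ∧ IsChordless p ∧
    (G.componentsAvoiding {x | x ∈ p.support}).Subsingleton ∧
    {x : V | x ∈ p.support ∧ G.degree x ≠ 3}.Subsingleton ∧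
    (G.contractSet {x | x ∈ p.support}).ExactlyEdgeConnected 3

end Multigraph
namespace Multigraph

open scoped Classical

variable {V : Type}

/-- Smooth out the degree-two vertex `x` (whose two incident edges are
`e₁ = (x, a)` and `e₂ = (x, b)`): delete `x`, `e₁` and `e₂` and add a single
new edge joining `a` and `b`. -/
noncomputable def smoothAt {S : Set V} (H : Multigraph ↥S) (x a b : ↥S)
    (e₁ e₂ : H.Edge) (hne : e₁ ≠ e₂)
    (h₁ : H.ends e₁ = s(x, a)) (h₂ : H.ends e₂ = s(x, b))
    (hax : a ≠ x) (hbx : b ≠ x) (hab : a ≠ b)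
    (hdeg : ∀ e : H.Edge, x ∈ H.ends e → e = e₁ ∨ e = e₂) :
    Multigraph ↥(S \ {(x : V)}) where
  Edge := {e : H.Edge // e ≠ e₁ ∧ e ≠ e₂} ⊕ Unit
  ends e :=
    match e with
    | .inl e =>
        (sym2RestrictP (fun y : ↥S => y ≠ x) (H.ends e.1)
            (fun y hy hyx => by
              subst hyx
              rcases hdeg e.1 hy with h | h
              exacts [e.2.1 h, e.2.2 h])).map
          fun y => ⟨y.1.1, y.1.2, fun hh => y.2 (Subtype.ext hh)⟩
    | .inr _ =>
        s(⟨a.1, a.2, fun hh => hax (Subtype.ext hh)⟩,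
          ⟨b.1, b.2, fun hh => hbx (Subtype.ext hh)⟩)
  loopless := by
    rintro (e | e) hd
    · refine map_not_isDiag _ _ (fun y _ z _ h => ?_)
        (sym2RestrictP_not_isDiag _ _ _ (H.loopless e.1)) hd
      have hv := Subtype.ext_iff.mp h
      exact Subtype.ext (Subtype.ext hv)
    · rw [Sym2.mk_isDiag_iff] at hd
      have hv := Subtype.ext_iff.mp hd
      exact hab (Subtype.ext hv)
  edge_finite := by
    have := H.edge_finite
    exact inferInstance

/-- `SmoothSeq H K` : the multigraph `K` is obtained from `H` by a finite
sequence of smoothings of degree-two vertices. -/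
inductive SmoothSeq {V : Type} : ∀ {S T : Set V}, Multigraph ↥S → Multigraph ↥T → Prop
  | refl {S : Set V} (H : Multigraph ↥S) : SmoothSeq H H
  | step {S T : Set V} {H : Multigraph ↥S} {K : Multigraph ↥T}
      (x a b : ↥S) (e₁ e₂ : H.Edge) (hne : e₁ ≠ e₂)
      (h₁ : H.ends e₁ = s(x, a)) (h₂ : H.ends e₂ = s(x, b))
      (hax : a ≠ x) (hbx : b ≠ x) (hab : a ≠ b)
      (hdeg : ∀ e : H.Edge, x ∈ H.ends e → e = e₁ ∨ e = e₂) :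
      SmoothSeq (smoothAt H x a b e₁ e₂ hne h₁ h₂ hax hbx hab hdeg) K → SmoothSeq H K

/-- `G` is a 3-thick tree: it is obtained from a tree by replacing every tree
edge by three parallel edges. -/
def IsThreeThickTree (G : Multigraph V) : Prop :=
  ∃ T : SimpleGraph V, T.IsTree ∧
    ∃ f : G.Edge ≃ T.edgeSet × Fin 3, ∀ e : G.Edge, G.ends e = ((f e).1 : Sym2 V)

/-- The graphs obtainable from dumbbell graphs by cycle expansions and block
gluings (up to isomorphism). -/
inductive Synth3 : ∀ {V : Type}, Multigraph V → Prop
  | dumbbell : Synth3 dumbbell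
  | glue {V₁ V₂ : Type} {G₁ : Multigraph V₁} {G₂ : Multigraph V₂} (u₁ : V₁) (u₂ : V₂) :
      Synth3 G₁ → Synth3 G₂ → Synth3 (blockGlue G₁ G₂ u₁ u₂)
  | expand {V : Type} {G : Multigraph V} (u : V) {d d' : ℕ} (h2 : 2 ≤ d') (hdd : d' ≤ d)
      (ι : Fin d ≃ {e : G.Edge // u ∈ G.ends e}) :
      Synth3 G → Synth3 (G.cycleExpand u h2 hdd ι)
  | iso {V W : Type} {G : Multigraph V} {H : Multigraph W} :
      Synth3 G → Iso G H → Synth3 H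

/-- The graphs obtainable from 3-thick trees by block-respecting cycle
expansions (cycle expansions whose new cycle lies inside a single block of the
resulting graph), up to isomorphism. -/
inductive BRSynth : ∀ {V : Type}, Multigraph V → Prop
  | base {V : Type} {G : Multigraph V} : IsThreeThickTree G → BRSynth G
  | expand {V : Type} {G : Multigraph V} (u : V) {d d' : ℕ} (h2 : 2 ≤ d') (hdd : d' ≤ d)
      (ι : Fin d ≃ {e : G.Edge // u ∈ G.ends e})
      (hblock : ∃ B : Set ({x : V // x ≠ u} ⊕ Fin d'),
        (G.cycleExpand u h2 hdd ι).IsBlock B ∧ ∀ j : Fin d', Sum.inr j ∈ B) :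
      BRSynth G → BRSynth (G.cycleExpand u h2 hdd ι)
  | iso {V W : Type} {G : Multigraph V} {H : Multigraph W} :
      BRSynth G → Iso G H → BRSynth H

end Multigraph

/-!
A map `F` on vertices together with pairwise disjoint edge sets `R e` *routes* `G` into `H`
when every edge `e` of `G` is replaced by a trail of `H` inside `R e` joining the images of
its ends; then `k` edge-disjoint trails of `G` become `k` edge-disjoint trails of `H`.

Upper bound: collapsing the `G₂`-side of the gluing onto `u₁` routes the gluing into `G₁`
(the `i`-th new edge goes to the `i`-th edge at `u₁`, the edges of `G₂` disappear) and keeps a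
vertex of the `G₁`-side apart from every other vertex, so `k + 1` edge-disjoint trails in the
gluing would give `k + 1` in `G₁`.

Lower bound: the last exits from `u₂` of `k` edge-disjoint trails from `u₂` to a vertex `w`
form a fan of edge-disjoint trails from the `k` neighbours of `u₂` to `w` avoiding `u₂`.
Prefixed by the new edges, they route the edges at `u₁` into the gluing with `u₁ ↦ w`. Taking
`w` arbitrary, or equal to the target vertex, handles pairs with at least one end on the
`G₁`-side; the symmetry of the gluing handles the rest.
-/

namespace Multigraph

open scoped Classical

variable {V W : Type}

namespace Walk

variable {G : Multigraph V}

def append : ∀ {u v w : V}, G.Walk u v → G.Walk v w → G.Walk u w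
  | _, _, _, nil _, q => q
  | _, _, _, cons e he p, q => cons e he (p.append q)

def reverse : ∀ {u v : V}, G.Walk u v → G.Walk v u
  | _, _, nil v => nil v
  | _, _, cons e he p => p.reverse.append (cons e (by rw [he, Sym2.eq_swap]) (nil _))

def copy {u v u' v' : V} (p : G.Walk u v) (hu : u = u') (hv : v = v') : G.Walk u' v' :=
  hu ▸ hv ▸ p

@[simp] lemma edges_nil (v : V) : (nil v : G.Walk v v).edges = [] := rfl

@[simp] lemma edges_cons {u v w : V} (e : G.Edge) (he : G.ends e = s(u, v)) (p : G.Walk v w) :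
    (cons e he p).edges = e :: p.edges := rfl

@[simp] lemma edges_append : ∀ {u v w : V} (p : G.Walk u v) (q : G.Walk v w),
    (p.append q).edges = p.edges ++ q.edges
  | _, _, _, nil _, _ => rfl
  | _, _, _, cons e he p, q => by simp [append, edges_append p q]

@[simp] lemma edges_reverse : ∀ {u v : V} (p : G.Walk u v), p.reverse.edges = p.edges.reverse
  | _, _, nil _ => rfl
  | _, _, cons e he p => by simp [reverse, edges_reverse p]

@[simp] lemma edges_copy {u v u' v' : V} (p : G.Walk u v) (hu : u = u') (hv : v = v') :
    (p.copy hu hv).edges = p.edges := by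
  subst hu hv
  rfl

@[simp] lemma support_copy {u v u' v' : V} (p : G.Walk u v) (hu : u = u') (hv : v = v') :
    (p.copy hu hv).support = p.support := by
  subst hu hv
  rfl

lemma start_mem_support : ∀ {u v : V} (p : G.Walk u v), u ∈ p.support
  | _, _, nil _ => List.mem_singleton_self _
  | _, _, cons _ _ _ => List.mem_cons_self

lemma mem_support_of_mem_edges : ∀ {u v : V} (p : G.Walk u v) {e : G.Edge} {x : V},
    e ∈ p.edges → x ∈ G.ends e → x ∈ p.support
  | _, _, nil _, _, _, he, _ => absurd he List.not_mem_nil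
  | _, _, cons e' he' p, e, x, he, hx => by
    rcases List.mem_cons.mp he with rfl | he
    · rw [he', Sym2.mem_iff] at hx
      rcases hx with rfl | rfl
      · exact List.mem_cons_self
      · exact List.mem_cons_of_mem _ p.start_mem_support
    · exact List.mem_cons_of_mem _ (p.mem_support_of_mem_edges he hx)

lemma exists_last_exit {u : V} : ∀ {x w : V} (p : G.Walk x w), u ∈ p.support → u ≠ w →
    ∃ (e : G.Edge) (he : u ∈ G.ends e) (q : G.Walk (Sym2.Mem.other he) w),
      u ∉ q.support ∧ (e :: q.edges).Sublist p.edges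
  | _, _, nil _, hu, huw => absurd (List.mem_singleton.mp hu) huw
  | _, _, cons e he p, hu, huw => by
    by_cases hup : u ∈ p.support
    · obtain ⟨e', he', q, hq, hsub⟩ := p.exists_last_exit hup huw
      exact ⟨e', he', q, hq, hsub.cons e⟩
    · obtain rfl : u = _ := (List.mem_cons.mp hu).resolve_right hup
      have hmem : u ∈ G.ends e := he ▸ Sym2.mem_mk_left _ _
      have hother : Sym2.Mem.other hmem = _ :=
        Sym2.congr_right.mp ((Sym2.other_spec hmem).trans he)
      exact ⟨e, hmem, p.copy hother.symm rfl, by simpa using hup, by simp⟩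

end Walk

section EdgeDisjointTrails

variable {G : Multigraph V} {κ : Type}

def IsEdgeDisjointTrails {a b : κ → V} (P : ∀ i, G.Walk (a i) (b i)) : Prop :=
  (∀ i, (P i).edges.Nodup) ∧ ∀ i j, i ≠ j → ∀ e ∈ (P i).edges, e ∉ (P j).edges

lemma hasEDP_iff {u v : V} {k : ℕ} :
    G.HasEDP u v k ↔ ∃ P : Fin k → G.Walk u v, IsEdgeDisjointTrails P :=
  Iff.rfl

lemma IsEdgeDisjointTrails.cons {a b c : κ → V} {P : ∀ i, G.Walk (a i) (b i)}
    (hP : IsEdgeDisjointTrails P) {f : κ → G.Edge} (hf : Function.Injective f)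
    (hfP : ∀ i j, f i ∉ (P j).edges) (hc : ∀ i, G.ends (f i) = s(c i, a i)) :
    IsEdgeDisjointTrails fun i => Walk.cons (f i) (hc i) (P i) := by
  refine ⟨fun i => List.nodup_cons.mpr ⟨hfP i i, hP.1 i⟩, fun i j hij e hi hj => ?_⟩
  simp only [Walk.edges_cons, List.mem_cons] at hi hj
  rcases hi with rfl | hi <;> rcases hj with hj | hj
  · exact hij (hf hj)
  · exact hfP i j hj
  · exact hfP j i (hj ▸ hi)
  · exact hP.2 i j hij e hi hj

theorem HasEDP.exists_fan {u w : V} {k : ℕ} (ι : Fin k ≃ {e : G.Edge // u ∈ G.ends e})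
    (huw : u ≠ w) (h : G.HasEDP u w k) :
    ∃ T : ∀ i, G.Walk (Sym2.Mem.other (ι i).2) w,
      (∀ i, u ∉ (T i).support) ∧ IsEdgeDisjointTrails T := by
  obtain ⟨P, hnd, hdisj⟩ := h
  choose e he q hq hsub using fun j => (P j).exists_last_exit (Walk.start_mem_support _) huw
  -- the last exits of edge-disjoint trails are distinct edges at `u`, hence all `k` of them
  have hinj : Function.Injective fun j => ι.symm ⟨e j, he j⟩ := by
    intro i j hij
    by_contra hne
    have hij' : e i = e j := congrArg Subtype.val (ι.symm.injective hij)
    exact hdisj i j hne (e i) ((hsub i).mem List.mem_cons_self)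
      (hij' ▸ (hsub j).mem List.mem_cons_self)
  set σ := Equiv.ofBijective _ (Finite.injective_iff_bijective.mp hinj)
  have hσ : ∀ i, ι i = ⟨e (σ.symm i), he (σ.symm i)⟩ := fun i =>
    (congrArg ι (σ.apply_symm_apply i)).symm.trans (ι.apply_symm_apply _)
  have hother : ∀ i, Sym2.Mem.other (he (σ.symm i)) = Sym2.Mem.other (ι i).2 := fun i =>
    congrArg (fun z : {e // u ∈ G.ends e} => Sym2.Mem.other z.2) (hσ i).symm
  have hqP : ∀ j, ∀ f ∈ (q j).edges, f ∈ (P j).edges :=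
    fun j f hf => (hsub j).mem (List.mem_cons_of_mem _ hf)
  refine ⟨fun i => (q (σ.symm i)).copy (hother i) rfl, fun i => by simpa using hq _,
    fun i => by simpa using ((hsub _).nodup (hnd _)).of_cons, fun i j hij f hi hj => ?_⟩
  simp only [Walk.edges_copy] at hi hj
  exact hdisj _ _ (σ.symm.injective.ne hij) f (hqP _ f hi) (hqP _ f hj)

end EdgeDisjointTrails

section Routing

open Function

variable {G : Multigraph V} {H : Multigraph W} {F : V → W} {R : G.Edge → Set H.Edge}

def Routes (F : V → W) (R : G.Edge → Set H.Edge) (e : G.Edge) : Prop :=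
  ∀ x y, G.ends e = s(x, y) → ∃ q : H.Walk (F x) (F y), q.edges.Nodup ∧ ∀ h ∈ q.edges, h ∈ R e

lemma Routes.of_walk {e : G.Edge} {x y : V} (he : G.ends e = s(x, y)) (q : H.Walk (F x) (F y))
    (hq : q.edges.Nodup) (hqR : ∀ h ∈ q.edges, h ∈ R e) : Routes F R e := by
  intro x' y' he'
  rcases Sym2.eq_iff.mp (he.symm.trans he') with ⟨rfl, rfl⟩ | ⟨rfl, rfl⟩
  · exact ⟨q, hq, hqR⟩
  · exact ⟨q.reverse, by simpa using hq, by simpa using hqR⟩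

lemma Routes.of_ends_map {e : G.Edge} {h : H.Edge} (hh : H.ends h = (G.ends e).map F)
    (hR : h ∈ R e) : Routes F R e := by
  obtain ⟨x, y, hxy⟩ := exists_pair_eq (G.ends e)
  exact .of_walk hxy (.cons h (by rw [hh, hxy, Sym2.map_mk]) (.nil _)) (by simp)
    (by simpa using hR)

lemma Routes.of_map_isDiag {e : G.Edge} (hd : ((G.ends e).map F).IsDiag) : Routes F R e := by
  obtain ⟨x, y, hxy⟩ := exists_pair_eq (G.ends e)
  rw [hxy, Sym2.map_mk, Sym2.mk_isDiag_iff] at hd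
  exact .of_walk hxy ((Walk.nil _).copy rfl hd) (by simp) (by simp)

theorem Walk.exists_routed (hR : Pairwise (Disjoint on R)) :
    ∀ {x y : V} (p : G.Walk x y), p.edges.Nodup → (∀ e ∈ p.edges, Routes F R e) →
      ∃ q : H.Walk (F x) (F y), q.edges.Nodup ∧ ∀ h ∈ q.edges, ∃ e ∈ p.edges, h ∈ R e
  | _, _, nil _, _, _ => ⟨.nil _, by simp, by simp⟩
  | _, _, cons e he p, hnd, hroutes => by
    rw [edges_cons, List.nodup_cons] at hnd
    obtain ⟨r, hr, hrR⟩ := hroutes e List.mem_cons_self _ _ he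
    obtain ⟨q, hq, hqR⟩ :=
      p.exists_routed hR hnd.2 fun e' he' => hroutes e' (List.mem_cons_of_mem _ he')
    refine ⟨r.append q, ?_, ?_⟩
    · rw [edges_append, List.nodup_append]
      refine ⟨hr, hq, fun h hhr h' hhq hhh => ?_⟩
      subst hhh
      obtain ⟨e', he', hh⟩ := hqR h hhq
      exact Set.disjoint_left.mp (hR (ne_of_mem_of_not_mem he' hnd.1).symm) (hrR h hhr) hh
    · intro h hh
      rcases List.mem_append.mp (by simpa using hh) with hh | hh
      · exact ⟨e, List.mem_cons_self, hrR h hh⟩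
      · obtain ⟨e', he', hh⟩ := hqR h hh
        exact ⟨e', List.mem_cons_of_mem _ he', hh⟩

theorem IsEdgeDisjointTrails.exists_routed {κ : Type} {a b : κ → V}
    {P : ∀ i, G.Walk (a i) (b i)} (hP : IsEdgeDisjointTrails P) (hR : Pairwise (Disjoint on R))
    (hroutes : ∀ i, ∀ e ∈ (P i).edges, Routes F R e) :
    ∃ Q : ∀ i, H.Walk (F (a i)) (F (b i)),
      IsEdgeDisjointTrails Q ∧ ∀ i, ∀ h ∈ (Q i).edges, ∃ e ∈ (P i).edges, h ∈ R e := by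
  choose Q hQ hQR using fun i => (P i).exists_routed hR (hP.1 i) (hroutes i)
  refine ⟨Q, ⟨hQ, fun i j hij h hi hj => ?_⟩, hQR⟩
  obtain ⟨e, he, hi⟩ := hQR i h hi
  obtain ⟨e', he', hj⟩ := hQR j h hj
  obtain rfl : e = e' := by_contra fun hne => Set.disjoint_left.mp (hR hne) hi hj
  exact hP.2 i j hij e he he'

theorem HasEDP.of_routes {x y : V} {k : ℕ} (h : G.HasEDP x y k) (hR : Pairwise (Disjoint on R))
    (hroutes : ∀ e, Routes F R e) : H.HasEDP (F x) (F y) k := by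
  obtain ⟨P, hP⟩ := hasEDP_iff.mp h
  obtain ⟨Q, hQ, -⟩ := hP.exists_routed hR fun _ e _ => hroutes e
  exact hasEDP_iff.mpr ⟨Q, hQ⟩

end Routing

lemma map_sym2RestrictP {α β : Type} {P : α → Prop} {z : Sym2 α} {h : ∀ x ∈ z, P x}
    {g : {x // P x} → β} {f : α → β} (hfg : ∀ x (hx : P x), g ⟨x, hx⟩ = f x) :
    (sym2RestrictP P z h).map g = z.map f := by
  rw [sym2RestrictP, Sym2.map_map]
  exact Sym2.map_congr fun x hx => by simp [dif_pos (h x hx), hfg]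

noncomputable def extendNe (u : V) (c : W) (f : {x // x ≠ u} → W) (x : V) : W :=
  if h : x = u then c else f ⟨x, h⟩

@[simp] lemma extendNe_self (u : V) (c : W) (f : {x // x ≠ u} → W) : extendNe u c f u = c :=
  dif_pos rfl

lemma extendNe_of_ne {u x : V} (h : x ≠ u) (c : W) (f : {x // x ≠ u} → W) :
    extendNe u c f x = f ⟨x, h⟩ :=
  dif_neg h

section VertexGlue

open Function

variable {V₁ V₂ γ : Type} {G₁ : Multigraph V₁} {G₂ : Multigraph V₂} {u₁ : V₁} {u₂ : V₂} {k : ℕ}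
  {ι₁ : Fin k ≃ {e : G₁.Edge // u₁ ∈ G₁.ends e}} {ι₂ : Fin k ≃ {e : G₂.Edge // u₂ ∈ G₂.ends e}}

lemma vertexGlue_ends_inl_map (e : {e : G₁.Edge // u₁ ∉ G₁.ends e})
    {g : {x : V₁ // x ≠ u₁} ⊕ {y : V₂ // y ≠ u₂} → γ} {f : V₁ → γ}
    (hfg : ∀ x (hx : x ≠ u₁), g (.inl ⟨x, hx⟩) = f x) :
    ((vertexGlue G₁ G₂ u₁ u₂ ι₁ ι₂).ends (.inl e)).map g = (G₁.ends e.1).map f := by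
  change ((sym2RestrictP _ _ _).map Sum.inl).map g = _
  rw [Sym2.map_map]
  exact map_sym2RestrictP hfg

lemma vertexGlue_ends_inr_inl_map (e : {e : G₂.Edge // u₂ ∉ G₂.ends e})
    {g : {x : V₁ // x ≠ u₁} ⊕ {y : V₂ // y ≠ u₂} → γ} {f : V₂ → γ}
    (hfg : ∀ y (hy : y ≠ u₂), g (.inr ⟨y, hy⟩) = f y) :
    ((vertexGlue G₁ G₂ u₁ u₂ ι₁ ι₂).ends (.inr (.inl e))).map g = (G₂.ends e.1).map f := by
  change ((sym2RestrictP _ _ _).map Sum.inr).map g = _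
  rw [Sym2.map_map]
  exact map_sym2RestrictP hfg

lemma vertexGlue_ends_inl (e : {e : G₁.Edge // u₁ ∉ G₁.ends e})
    (c : {x : V₁ // x ≠ u₁} ⊕ {y : V₂ // y ≠ u₂}) :
    (vertexGlue G₁ G₂ u₁ u₂ ι₁ ι₂).ends (.inl e) = (G₁.ends e.1).map (extendNe u₁ c .inl) := by
  rw [← vertexGlue_ends_inl_map e (g := id) fun x hx => (extendNe_of_ne hx _ _).symm,
    Sym2.map_id, id]

lemma vertexGlue_ends_inr_inl (e : {e : G₂.Edge // u₂ ∉ G₂.ends e})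
    (c : {x : V₁ // x ≠ u₁} ⊕ {y : V₂ // y ≠ u₂}) :
    (vertexGlue G₁ G₂ u₁ u₂ ι₁ ι₂).ends (.inr (.inl e)) =
      (G₂.ends e.1).map (extendNe u₂ c .inr) := by
  rw [← vertexGlue_ends_inr_inl_map e (g := id) fun y hy => (extendNe_of_ne hy _ _).symm,
    Sym2.map_id, id]

theorem HasEDP.vertexGlue_collapse {s t : {x : V₁ // x ≠ u₁} ⊕ {y : V₂ // y ≠ u₂}} {n : ℕ}
    (h : (vertexGlue G₁ G₂ u₁ u₂ ι₁ ι₂).HasEDP s t n) :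
    G₁.HasEDP (Sum.elim Subtype.val (fun _ => u₁) s) (Sum.elim Subtype.val (fun _ => u₁) t) n := by
  refine h.of_routes (R := Sum.elim (fun e => {e.1}) (Sum.elim (fun _ => ∅) fun i => {(ι₁ i).1}))
    ?_ ?_
  · rintro (e | e | i) (e' | e' | i') hne <;>
      simp only [onFun, Sum.elim_inl, Sum.elim_inr, Set.disjoint_singleton, Set.disjoint_empty,
        Set.empty_disjoint, ne_eq]
    · exact fun h => hne (congrArg _ (Subtype.ext h))
    · exact fun h => e.2 (h ▸ (ι₁ i').2)
    · exact fun h => e'.2 (h ▸ (ι₁ i).2)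
    · exact fun h => hne (congrArg (Sum.inr ∘ Sum.inr) (ι₁.injective (Subtype.ext h)))
  · rintro (e | e | i)
    · refine .of_ends_map ?_ (Set.mem_singleton _)
      rw [vertexGlue_ends_inl_map e (f := id) fun _ _ => rfl, Sym2.map_id, id]
    · refine .of_map_isDiag ?_
      rw [vertexGlue_ends_inr_inl_map e (f := fun _ => u₁) fun _ _ => rfl]
      obtain ⟨x, y, hxy⟩ := exists_pair_eq (G₂.ends e.1)
      simp [hxy]
    · refine .of_ends_map ?_ (Set.mem_singleton _)
      change _ = (s(_, _) : Sym2 _).map _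
      rw [Sym2.map_mk]
      exact (Sym2.other_spec (ι₁ i).2).symm.trans Sym2.eq_swap

theorem exists_vertexGlue_fan (w : {y : V₂ // y ≠ u₂}) (h : G₂.HasEDP u₂ w k) :
    ∃ R : ∀ i, (vertexGlue G₁ G₂ u₁ u₂ ι₁ ι₂).Walk
        (.inl ⟨Sym2.Mem.other (ι₁ i).2, other_ne (ι₁ i).2⟩) (.inr w),
      IsEdgeDisjointTrails R ∧ ∀ i, ∀ g ∈ (R i).edges, g.isRight := by
  obtain ⟨T, hTu, hT⟩ := h.exists_fan ι₂ w.2.symm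
  let Rt : G₂.Edge → Set (vertexGlue G₁ G₂ u₁ u₂ ι₁ ι₂).Edge := fun e =>
    if he : u₂ ∈ G₂.ends e then ∅ else {.inr (.inl ⟨e, he⟩)}
  have hRt : ∀ e, ∀ g ∈ Rt e, ∃ e', g = .inr (.inl e') := fun e g hg => by
    simp only [Rt] at hg
    split_ifs at hg
    · exact absurd hg (Set.notMem_empty g)
    · exact ⟨_, hg⟩
  have hRt_disj : Pairwise (Disjoint on Rt) := fun e e' hne => by
    simp only [onFun, Rt]
    split_ifs
    · exact Set.disjoint_empty _
    · exact Set.empty_disjoint _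
    · exact Set.disjoint_empty _
    · exact Set.disjoint_singleton.mpr fun h =>
        hne (congrArg Subtype.val (Sum.inl_injective (Sum.inr_injective h)))
  obtain ⟨Q, hQ, hQR⟩ := hT.exists_routed (F := extendNe u₂ (.inr w) .inr) hRt_disj
    fun i e he =>
      have hu : u₂ ∉ G₂.ends e := fun hu => hTu i ((T i).mem_support_of_mem_edges he hu)
      .of_ends_map (vertexGlue_ends_inr_inl ⟨e, hu⟩ _) (by simp only [Rt, dif_neg hu]; rfl)
  have hQright : ∀ i, ∀ g ∈ (Q i).edges, ∃ e', g = .inr (.inl e') := fun i g hg => by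
    obtain ⟨e, -, hge⟩ := hQR i g hg
    exact hRt e g hge
  let Q' i : (vertexGlue G₁ G₂ u₁ u₂ ι₁ ι₂).Walk
      (.inr ⟨Sym2.Mem.other (ι₂ i).2, other_ne (ι₂ i).2⟩) (.inr w) :=
    (Q i).copy (extendNe_of_ne _ _ _) (extendNe_of_ne w.2 _ _)
  refine ⟨fun i => .cons (.inr (.inr i)) rfl (Q' i), ?_, ?_⟩
  · refine IsEdgeDisjointTrails.cons (P := Q') (f := fun i => .inr (.inr i))
      (hc := fun _ => rfl) (by simpa [Q', IsEdgeDisjointTrails] using hQ)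
      (fun i j hij => Sum.inr_injective (Sum.inr_injective hij)) fun i j hij => ?_
    obtain ⟨e', he'⟩ := hQright j _ (by simpa [Q'] using hij)
    exact Sum.inr_ne_inl (Sum.inr_injective he')
  · intro i g hg
    rcases List.mem_cons.mp hg with rfl | hg
    · rfl
    · obtain ⟨e', rfl⟩ := hQright i g (by simpa [Q'] using hg)
      rfl

theorem HasEDP.vertexGlue_extendNe {x y : V₁} (h : G₁.HasEDP x y k) (w : {y : V₂ // y ≠ u₂})
    (hw : G₂.HasEDP u₂ w k) :
    (vertexGlue G₁ G₂ u₁ u₂ ι₁ ι₂).HasEDP (extendNe u₁ (.inr w) .inl x)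
      (extendNe u₁ (.inr w) .inl y) k := by
  obtain ⟨R, hR, hRright⟩ := exists_vertexGlue_fan (ι₁ := ι₁) w hw
  refine h.of_routes (R := fun e =>
      if he : u₁ ∈ G₁.ends e then {g | g ∈ (R (ι₁.symm ⟨e, he⟩)).edges} else {.inl ⟨e, he⟩})
    (fun e e' hne => ?_) fun e => ?_
  · simp only [onFun]
    split_ifs with he he'
    · refine Set.disjoint_left.mpr fun g hg hg' => hR.2 _ _ (fun hij => hne ?_) g hg hg'
      exact congrArg Subtype.val (ι₁.symm.injective hij)
    · exact Set.disjoint_singleton_right.mpr fun hg => by simpa using hRright _ _ hg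
    · exact Set.disjoint_singleton_left.mpr fun hg => by simpa using hRright _ _ hg
    · exact Set.disjoint_singleton.mpr fun hg =>
        hne (congrArg Subtype.val (Sum.inl_injective hg))
  · by_cases he : u₁ ∈ G₁.ends e
    · obtain ⟨i, rfl⟩ : ∃ i, (ι₁ i).1 = e := ⟨ι₁.symm ⟨e, he⟩, by simp⟩
      refine .of_walk ((Sym2.other_spec (ι₁ i).2).symm.trans Sym2.eq_swap)
        ((R i).copy (extendNe_of_ne _ _ _).symm (extendNe_self _ _ _).symm)
        (by simpa using hR.1 i) fun g hg => ?_
      rw [dif_pos he, show ι₁.symm ⟨(ι₁ i).1, he⟩ = i from ι₁.symm_apply_apply i]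
      simpa using hg
    · exact .of_ends_map (vertexGlue_ends_inl ⟨e, he⟩ _) (by simp only [dif_neg he]; rfl)

def vertexGlueSwapEdge :
    (vertexGlue G₂ G₁ u₂ u₁ ι₂ ι₁).Edge → (vertexGlue G₁ G₂ u₁ u₂ ι₁ ι₂).Edge
  | .inl e => .inr (.inl e)
  | .inr (.inl e) => .inl e
  | .inr (.inr i) => .inr (.inr i)

lemma vertexGlueSwapEdge_injective : Injective (vertexGlueSwapEdge (ι₁ := ι₁) (ι₂ := ι₂)) := by
  rintro (e | e | i) (e' | e' | i') h <;> cases h <;> rfl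

lemma vertexGlue_ends_swapEdge (g : (vertexGlue G₂ G₁ u₂ u₁ ι₂ ι₁).Edge) :
    (vertexGlue G₁ G₂ u₁ u₂ ι₁ ι₂).ends (vertexGlueSwapEdge g) =
      ((vertexGlue G₂ G₁ u₂ u₁ ι₂ ι₁).ends g).map Sum.swap := by
  rcases g with e | e | i
  · change _ = ((sym2RestrictP _ _ _).map Sum.inl).map Sum.swap
    rw [Sym2.map_map]
    rfl
  · change _ = ((sym2RestrictP _ _ _).map Sum.inr).map Sum.swap
    rw [Sym2.map_map]
    rfl
  · exact Sym2.eq_swap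

theorem HasEDP.vertexGlue_swap {s t : {y : V₂ // y ≠ u₂} ⊕ {x : V₁ // x ≠ u₁}} {n : ℕ}
    (h : (vertexGlue G₂ G₁ u₂ u₁ ι₂ ι₁).HasEDP s t n) :
    (vertexGlue G₁ G₂ u₁ u₂ ι₁ ι₂).HasEDP s.swap t.swap n :=
  h.of_routes (R := fun g => {vertexGlueSwapEdge g})
    (fun _ _ hne => Set.disjoint_singleton.mpr (vertexGlueSwapEdge_injective.ne hne))
    fun g => .of_ends_map (vertexGlue_ends_swapEdge g) rfl

lemma hasEDP_vertexGlue_swap_iff {s t : {x : V₁ // x ≠ u₁} ⊕ {y : V₂ // y ≠ u₂}} {n : ℕ} :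
    (vertexGlue G₂ G₁ u₂ u₁ ι₂ ι₁).HasEDP s.swap t.swap n ↔
      (vertexGlue G₁ G₂ u₁ u₂ ι₁ ι₂).HasEDP s t n :=
  ⟨fun h => by simpa using h.vertexGlue_swap, HasEDP.vertexGlue_swap⟩

theorem vertexGlue_exactlyEdgeConnected_inl (h₁ : G₁.ExactlyEdgeConnected k)
    (h₂ : G₂.ExactlyEdgeConnected k) (a : {x : V₁ // x ≠ u₁})
    (t : {x : V₁ // x ≠ u₁} ⊕ {y : V₂ // y ≠ u₂}) (hat : .inl a ≠ t) :
    (vertexGlue G₁ G₂ u₁ u₂ ι₁ ι₂).HasEDP (.inl a) t k ∧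
      ¬ (vertexGlue G₁ G₂ u₁ u₂ ι₁ ι₂).HasEDP (.inl a) t (k + 1) := by
  have : Nontrivial V₂ := h₂.1
  have hcollapse : a.1 ≠ Sum.elim Subtype.val (fun _ => u₁) t := by
    rcases t with b | b
    · exact fun hab => hat (congrArg Sum.inl (Subtype.ext hab))
    · exact a.2
  refine ⟨?_, fun h => (h₁.2 _ _ hcollapse).2 h.vertexGlue_collapse⟩
  rcases t with b | b
  · obtain ⟨w, hw⟩ := exists_ne u₂
    simpa [extendNe_of_ne a.2, extendNe_of_ne b.2] using
      (h₁.2 _ _ hcollapse).1.vertexGlue_extendNe (ι₁ := ι₁) ⟨w, hw⟩ (h₂.2 u₂ w hw.symm).1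
  · simpa [extendNe_of_ne a.2] using
      (h₁.2 _ _ hcollapse).1.vertexGlue_extendNe (ι₁ := ι₁) b (h₂.2 u₂ b b.2.symm).1

end VertexGlue

/-- **Vertex gluing preserves exact `k`-edge-connectivity.**  Let `G₁`, `G₂`
be exactly `k`-edge-connected multigraphs on disjoint vertex types, and let
`u₁ ∈ G₁`, `u₂ ∈ G₂` be degree-`k` vertices whose incident edges are
enumerated by `ι₁`, `ι₂` (so the `i`-th edge at `u₁` goes to the neighbor
`v₁^i` and the `i`-th edge at `u₂` goes to `v₂^i`).  Then the vertex gluing of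
`G₁` and `G₂` — obtained by deleting `u₁` and `u₂` with their incident edges
and adding the `k` edges `(v₁^i, v₂^i)` — is exactly `k`-edge-connected. -/
theorem vertexGlue_exactlyEdgeConnected {V₁ V₂ : Type} (G₁ : Multigraph V₁)
    (G₂ : Multigraph V₂) (u₁ : V₁) (u₂ : V₂) {k : ℕ}
    (ι₁ : Fin k ≃ {e : G₁.Edge // u₁ ∈ G₁.ends e})
    (ι₂ : Fin k ≃ {e : G₂.Edge // u₂ ∈ G₂.ends e})
    (h₁ : G₁.ExactlyEdgeConnected k) (h₂ : G₂.ExactlyEdgeConnected k) :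
    (vertexGlue G₁ G₂ u₁ u₂ ι₁ ι₂).ExactlyEdgeConnected k := by
  have : Nontrivial V₁ := h₁.1
  have : Nontrivial V₂ := h₂.1
  refine ⟨?_, ?_⟩
  · obtain ⟨a, ha⟩ := exists_ne u₁
    obtain ⟨b, hb⟩ := exists_ne u₂
    exact ⟨.inl ⟨a, ha⟩, .inr ⟨b, hb⟩, Sum.inl_ne_inr⟩
  · rintro (a | b) t hst
    · exact vertexGlue_exactlyEdgeConnected_inl h₁ h₂ a t hst
    · rw [← hasEDP_vertexGlue_swap_iff (ι₁ := ι₁) (ι₂ := ι₂),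
        ← hasEDP_vertexGlue_swap_iff (ι₁ := ι₁) (ι₂ := ι₂)]
      exact vertexGlue_exactlyEdgeConnected_inl h₂ h₁ b t.swap fun h =>
        hst (by rw [← Sum.swap_swap t, ← h]; rfl)

end Multigraph
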